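/- Let d ≥ 3 and let f : ℝ^d → [0,∞) be measurable with ∫ f(v)⟨v⟩² dv < ∞ and H₊(f) := ∫ f (log f)₊ dv < ∞. Let Ψ ∈ C([0,∞)) be positive on (0,∞) with lim_{r→∞} Ψ(r)/r = +∞ and m_Ψ(f) := ∫ f(v) Ψ(|v|²) dv < ∞. Set F(v) := ⟨v⟩² f(v). Then for every R₁ > 1 and every R₂ > 0, ∫_{{F > R₁}} F(v) dv ≤ 2 (1+R₂)/log(R₁) · H₊(f) + (1/R₂) ∫_{ℝ^d} f(v) |v|² dv + m_Ψ(f) · sup_{r ≥ R₂} r/Ψ(r) + m_Ψ(f) · sup_{r ≥ √R₁ − 1} (1+r)/Ψ(r). -/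
import Mathlib


open MeasureTheory Real Filter

noncomputable section

/-- Euclidean space `ℝ^d`. -/
abbrev Ed (d : ℕ) := EuclideanSpace ℝ (Fin d)

/-- Japanese bracket `⟨v⟩ = √(1+|v|²)`. -/
def jap {d : ℕ} (v : Ed d) : ℝ := Real.sqrt (1 + ‖v‖ ^ 2)

/-- `c_γ[f](v) = -(d-1)(γ+d) ∫ |v-w|^γ f(w) dw`. -/
def cgam (d : ℕ) (γ : ℝ) (f : Ed d → ℝ) (v : Ed d) : ℝ :=
  -(((d : ℝ) - 1) * (γ + (d : ℝ))) * ∫ w, ‖v - w‖ ^ γ * f w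

/-- Membership in `Y₀(f_in)`: nonnegative, in `L¹₂`, with the same mass, momentum and
energy as `f_in`, and entropy bounded by that of `f_in`. -/
def MemY0 {d : ℕ} (fin f : Ed d → ℝ) : Prop :=
  (∀ v, 0 ≤ f v) ∧ (Integrable fun v => f v * jap v ^ 2) ∧
  ((∫ v, f v) = ∫ v, fin v) ∧ ((∫ v, f v • v : Ed d) = ∫ v, fin v • v) ∧
  ((∫ v, f v * ‖v‖ ^ 2) = ∫ v, fin v * ‖v‖ ^ 2) ∧
  ((∫ v, f v * Real.log (f v)) ≤ ∫ v, fin v * Real.log (fin v))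

/-- Normalized initial datum: nonnegative, in `L¹₂ ∩ L log L`, with unit mass,
zero momentum and energy `d` (temperature 1). -/
def NormalizedInit {d : ℕ} (fin : Ed d → ℝ) : Prop :=
  (∀ v, 0 ≤ fin v) ∧ (Integrable fun v => fin v * jap v ^ 2) ∧
  (Integrable fun v => fin v * |Real.log (fin v)|) ∧
  ((∫ v, fin v) = 1) ∧ ((∫ v, fin v • v : Ed d) = 0) ∧
  ((∫ v, fin v * ‖v‖ ^ 2) = (d : ℝ))


lemma psi_nonneg_aux (Ψ : ℝ → ℝ) (hΨc : ContinuousOn Ψ (Set.Ici 0))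
    (hΨpos : ∀ r > (0 : ℝ), 0 < Ψ r) : ∀ r, 0 ≤ r → 0 ≤ Ψ r := by
  intro r hr
  rcases hr.lt_or_eq with h | h
  · exact (hΨpos r h).le
  · subst h
    have hc : ContinuousWithinAt Ψ (Set.Ioi 0) 0 :=
      (hΨc 0 Set.self_mem_Ici).mono Set.Ioi_subset_Ici_self
    refine ge_of_tendsto hc ?_
    filter_upwards [eventually_mem_nhdsWithin] with x hx
    exact (hΨpos x hx).le

lemma bddAbove_aux (Ψ : ℝ → ℝ) (hΨc : ContinuousOn Ψ (Set.Ici 0))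
    (hΨpos : ∀ r > (0 : ℝ), 0 < Ψ r)
    (hΨlim : Tendsto (fun r => Ψ r / r) atTop atTop)
    (b a : ℝ) (hb : 0 ≤ b) (ha : 0 < a) :
    BddAbove ((fun r => (b + r) / Ψ r) '' Set.Ici a) := by
  obtain ⟨M₀, hM₀⟩ := eventually_atTop.mp (hΨlim.eventually_ge_atTop 1)
  set M := max M₀ (max 1 a) with hMdef
  have hcont : ContinuousOn (fun r => (b + r) / Ψ r) (Set.Icc a M) := by
    refine ContinuousOn.div ?_ (hΨc.mono fun r hr => le_trans ha.le hr.1) ?_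
    · exact (continuous_const.add continuous_id).continuousOn
    · exact fun r hr => (hΨpos r (lt_of_lt_of_le ha hr.1)).ne'
  obtain ⟨C₁, hC₁⟩ := (isCompact_Icc.image_of_continuousOn hcont).bddAbove
  refine ⟨max C₁ (b + 1), ?_⟩
  rintro x ⟨r, hr, rfl⟩
  rcases le_or_gt r M with hrM | hrM
  · exact le_max_of_le_left (hC₁ ⟨r, ⟨hr, hrM⟩, rfl⟩)
  · have hr1 : (1 : ℝ) ≤ r :=
      le_trans (le_trans (le_max_left 1 a) (le_max_right M₀ _)) hrM.le
    have hr0 : (0 : ℝ) < r := lt_of_lt_of_le one_pos hr1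
    have h1 : (1 : ℝ) ≤ Ψ r / r :=
      hM₀ r (le_trans (le_max_left M₀ _) hrM.le)
    have hΨr : r ≤ Ψ r := by
      rw [le_div_iff₀ hr0, one_mul] at h1; exact h1
    have hΨrpos : 0 < Ψ r := hΨpos r hr0
    have hle : (b + r) / Ψ r ≤ b + 1 := by
      rw [div_le_iff₀ hΨrpos]
      nlinarith
    exact le_max_of_le_right hle

/-- entropy/moment control of the tail of `F = ⟨·⟩² f`. -/
theorem tail_bound_via_entropy {d : ℕ} (hd : 3 ≤ d)
    (f : Ed d → ℝ) (hmeas : Measurable f) (hpos : ∀ v, 0 ≤ f v)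
    (hL12 : Integrable fun v => f v * jap v ^ 2)
    (hHplus : Integrable fun v => f v * max (Real.log (f v)) 0)
    (Ψ : ℝ → ℝ) (hΨc : ContinuousOn Ψ (Set.Ici 0))
    (hΨpos : ∀ r > (0 : ℝ), 0 < Ψ r)
    (hΨlim : Tendsto (fun r => Ψ r / r) atTop atTop)
    (hmΨ : Integrable fun v => f v * Ψ (‖v‖ ^ 2)) :
    ∀ R₁ > (1 : ℝ), ∀ R₂ > (0 : ℝ),
      (∫ v in {v : Ed d | jap v ^ 2 * f v > R₁}, jap v ^ 2 * f v) ≤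
        2 * (1 + R₂) / Real.log R₁ * (∫ v, f v * max (Real.log (f v)) 0)
          + (1 / R₂) * (∫ v, f v * ‖v‖ ^ 2)
          + (∫ v, f v * Ψ (‖v‖ ^ 2)) * sSup ((fun r => r / Ψ r) '' Set.Ici R₂)
          + (∫ v, f v * Ψ (‖v‖ ^ 2)) *
              sSup ((fun r => (1 + r) / Ψ r) '' Set.Ici (Real.sqrt R₁ - 1)) := by
  intro R₁ hR₁ R₂ hR₂
  have hR₁0 : (0 : ℝ) < R₁ := by linarith
  have hlR : 0 < Real.log R₁ := Real.log_pos hR₁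
  have hsqrt1 : 1 < Real.sqrt R₁ := by
    rw [show (1 : ℝ) = Real.sqrt 1 from Real.sqrt_one.symm]
    exact Real.sqrt_lt_sqrt zero_le_one hR₁
  set a₁ : ℝ := Real.sqrt R₁ - 1 with ha₁def
  have ha₁ : 0 < a₁ := by rw [ha₁def]; linarith
  have hΨnn : ∀ r, 0 ≤ r → 0 ≤ Ψ r := psi_nonneg_aux Ψ hΨc hΨpos
  have hbdd3 : BddAbove ((fun r => r / Ψ r) '' Set.Ici R₂) := by
    have h := bddAbove_aux Ψ hΨc hΨpos hΨlim 0 R₂ le_rfl hR₂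
    simpa using h
  have hbdd4 : BddAbove ((fun r => (1 + r) / Ψ r) '' Set.Ici a₁) :=
    bddAbove_aux Ψ hΨc hΨpos hΨlim 1 a₁ zero_le_one ha₁
  set c₁ := 2 * (1 + R₂) / Real.log R₁ with hc₁
  set c₃ := sSup ((fun r => r / Ψ r) '' Set.Ici R₂) with hc₃
  set c₄ := sSup ((fun r => (1 + r) / Ψ r) '' Set.Ici a₁) with hc₄
  have hc₁0 : 0 ≤ c₁ := div_nonneg (by linarith) hlR.le
  have hc₃0 : 0 ≤ c₃ :=
    le_trans (div_nonneg hR₂.le (hΨnn R₂ hR₂.le)) (le_csSup hbdd3 ⟨R₂, Set.self_mem_Ici, rfl⟩)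
  have hc₄0 : 0 ≤ c₄ :=
    le_trans (div_nonneg (by linarith) (hΨnn a₁ ha₁.le)) (le_csSup hbdd4 ⟨a₁, Set.self_mem_Ici, rfl⟩)
  have hjap : ∀ v : Ed d, jap v ^ 2 = 1 + ‖v‖ ^ 2 := fun v =>
    Real.sq_sqrt (by positivity)
  have hE : Integrable fun v : Ed d => f v * ‖v‖ ^ 2 := by
    refine hL12.mono' ((hmeas.mul (measurable_norm.pow_const 2)).aestronglyMeasurable)
      (ae_of_all _ fun v => ?_)
    have h1 : 0 ≤ f v * ‖v‖ ^ 2 := mul_nonneg (hpos v) (sq_nonneg _)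
    rw [Real.norm_eq_abs, abs_of_nonneg h1, hjap v]
    nlinarith [hpos v, sq_nonneg ‖v‖]
  set S := {v : Ed d | jap v ^ 2 * f v > R₁} with hSdef
  have hScont : Continuous fun v : Ed d => jap v ^ 2 := by
    simp only [jap]
    exact (Real.continuous_sqrt.comp (continuous_const.add (continuous_norm.pow 2))).pow 2
  have hSmeas : MeasurableSet S := measurableSet_lt measurable_const (hScont.measurable.mul hmeas)
  have hF : Integrable fun v : Ed d => jap v ^ 2 * f v :=
    hL12.congr (ae_of_all _ fun v => mul_comm _ _)
  have hI1 : Integrable fun v : Ed d => c₁ * (f v * max (Real.log (f v)) 0) :=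
    hHplus.const_mul _
  have hI2 : Integrable fun v : Ed d => 1 / R₂ * (f v * ‖v‖ ^ 2) := hE.const_mul _
  have hI3 : Integrable fun v : Ed d => c₃ * (f v * Ψ (‖v‖ ^ 2)) := hmΨ.const_mul _
  have hI4 : Integrable fun v : Ed d => c₄ * (f v * Ψ (‖v‖ ^ 2)) := hmΨ.const_mul _
  set g : Ed d → ℝ := fun v =>
    c₁ * (f v * max (Real.log (f v)) 0) + 1 / R₂ * (f v * ‖v‖ ^ 2)
      + c₃ * (f v * Ψ (‖v‖ ^ 2)) + c₄ * (f v * Ψ (‖v‖ ^ 2)) with hgdef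
  have hI12 : Integrable fun v : Ed d =>
      c₁ * (f v * max (Real.log (f v)) 0) + 1 / R₂ * (f v * ‖v‖ ^ 2) := hI1.add hI2
  have hI123 : Integrable fun v : Ed d =>
      c₁ * (f v * max (Real.log (f v)) 0) + 1 / R₂ * (f v * ‖v‖ ^ 2)
        + c₃ * (f v * Ψ (‖v‖ ^ 2)) := hI12.add hI3
  have hg : Integrable g := hI123.add hI4
  have hg0 : ∀ v, 0 ≤ g v := by
    intro v
    have hfv := hpos v
    have hΨv := hΨnn (‖v‖ ^ 2) (sq_nonneg _)
    have hmx : (0 : ℝ) ≤ max (Real.log (f v)) 0 := le_max_right _ _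
    have t1 : 0 ≤ c₁ * (f v * max (Real.log (f v)) 0) :=
      mul_nonneg hc₁0 (mul_nonneg hfv hmx)
    have t2 : 0 ≤ 1 / R₂ * (f v * ‖v‖ ^ 2) :=
      mul_nonneg (by positivity) (mul_nonneg hfv (sq_nonneg _))
    have t3 : 0 ≤ c₃ * (f v * Ψ (‖v‖ ^ 2)) := mul_nonneg hc₃0 (mul_nonneg hfv hΨv)
    have t4 : 0 ≤ c₄ * (f v * Ψ (‖v‖ ^ 2)) := mul_nonneg hc₄0 (mul_nonneg hfv hΨv)
    simp only [hgdef]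
    linarith
  have hpt : ∀ v ∈ S, jap v ^ 2 * f v ≤ g v := by
    intro v hv
    simp only [hSdef, Set.mem_setOf_eq, gt_iff_lt] at hv
    rw [hjap v] at hv
    simp only [hgdef]
    rw [hjap v]
    set t := ‖v‖ ^ 2 with htdef
    have ht : 0 ≤ t := by rw [htdef]; positivity
    have hfv : 0 ≤ f v := hpos v
    have hΨv := hΨnn t ht
    have hmx : (0 : ℝ) ≤ max (Real.log (f v)) 0 := le_max_right _ _
    have hT1 : 0 ≤ c₁ * (f v * max (Real.log (f v)) 0) :=
      mul_nonneg hc₁0 (mul_nonneg hfv hmx)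
    have hT2 : 0 ≤ 1 / R₂ * (f v * t) := mul_nonneg (by positivity) (mul_nonneg hfv ht)
    have hT3 : 0 ≤ c₃ * (f v * Ψ t) := mul_nonneg hc₃0 (mul_nonneg hfv hΨv)
    have hT4 : 0 ≤ c₄ * (f v * Ψ t) := mul_nonneg hc₄0 (mul_nonneg hfv hΨv)
    by_cases hcase : Real.sqrt R₁ < f v
    · have hlog : Real.log R₁ / 2 ≤ max (Real.log (f v)) 0 := by
        have h1 : Real.log (Real.sqrt R₁) ≤ Real.log (f v) :=
          Real.log_le_log (Real.sqrt_pos.mpr hR₁0) hcase.le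
        rw [Real.log_sqrt hR₁0.le] at h1
        exact le_trans h1 (le_max_left _ _)
      have hkey : f v ≤ 2 / Real.log R₁ * (f v * max (Real.log (f v)) 0) := by
        rw [div_mul_eq_mul_div, le_div_iff₀ hlR]
        have h2 : f v * (Real.log R₁ / 2) ≤ f v * max (Real.log (f v)) 0 :=
          mul_le_mul_of_nonneg_left hlog hfv
        have h3 : f v * Real.log R₁ = 2 * (f v * (Real.log R₁ / 2)) := by ring
        linarith
      by_cases hcase2 : t ≤ R₂
      · have h1 : (1 + t) * f v ≤ (1 + R₂) * f v :=
          mul_le_mul_of_nonneg_right (by linarith) hfv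
        have h2 : (1 + R₂) * f v ≤
            (1 + R₂) * (2 / Real.log R₁ * (f v * max (Real.log (f v)) 0)) :=
          mul_le_mul_of_nonneg_left hkey (by linarith)
        have h3 : (1 + R₂) * (2 / Real.log R₁ * (f v * max (Real.log (f v)) 0))
            = c₁ * (f v * max (Real.log (f v)) 0) := by rw [hc₁]; ring
        linarith
      · push_neg at hcase2
        have htpos : 0 < t := lt_trans hR₂ hcase2
        have hΨt : 0 < Ψ t := hΨpos t htpos
        have h3 : t / Ψ t ≤ c₃ := le_csSup hbdd3 ⟨t, hcase2.le, rfl⟩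
        have hA : t * f v ≤ c₃ * (f v * Ψ t) := by
          have h4 := mul_le_mul_of_nonneg_right h3 (mul_nonneg hfv hΨt.le)
          have heq : t / Ψ t * (f v * Ψ t) = t * f v := by
            field_simp
          linarith
        have hB : f v ≤ 1 / R₂ * (f v * t) := by
          rw [div_mul_eq_mul_div, le_div_iff₀ hR₂]
          have := mul_le_mul_of_nonneg_left hcase2.le hfv
          linarith
        have hexp : (1 + t) * f v = f v + t * f v := by ring
        linarith
    · push_neg at hcase
      have hsp : 0 < Real.sqrt R₁ := by linarith
      have h1 : (1 + t) * f v ≤ (1 + t) * Real.sqrt R₁ :=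
        mul_le_mul_of_nonneg_left hcase (by linarith)
      have h2 : R₁ < (1 + t) * Real.sqrt R₁ := lt_of_lt_of_le hv h1
      have hs : Real.sqrt R₁ * Real.sqrt R₁ = R₁ := Real.mul_self_sqrt hR₁0.le
      have h3 : Real.sqrt R₁ < 1 + t := by nlinarith
      have hta : a₁ ≤ t := by rw [ha₁def]; linarith
      have htpos : 0 < t := lt_of_lt_of_le ha₁ hta
      have hΨt : 0 < Ψ t := hΨpos t htpos
      have h4 : (1 + t) / Ψ t ≤ c₄ := le_csSup hbdd4 ⟨t, hta, rfl⟩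
      have hmain : (1 + t) * f v ≤ c₄ * (f v * Ψ t) := by
        have h5 := mul_le_mul_of_nonneg_right h4 (mul_nonneg hfv hΨt.le)
        have heq : (1 + t) / Ψ t * (f v * Ψ t) = (1 + t) * f v := by
          field_simp
        linarith
      linarith
  calc (∫ v in S, jap v ^ 2 * f v) ≤ ∫ v in S, g v :=
        setIntegral_mono_on hF.integrableOn hg.integrableOn hSmeas hpt
    _ ≤ ∫ v, g v := setIntegral_le_integral hg (ae_of_all _ hg0)
    _ = c₁ * (∫ v, f v * max (Real.log (f v)) 0)
          + 1 / R₂ * (∫ v, f v * ‖v‖ ^ 2)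
          + (∫ v, f v * Ψ (‖v‖ ^ 2)) * c₃
          + (∫ v, f v * Ψ (‖v‖ ^ 2)) * c₄ := by
        simp only [hgdef]
        rw [integral_add hI123 hI4, integral_add hI12 hI3,
          integral_add hI1 hI2, integral_const_mul _ _, integral_const_mul _ _,
          integral_const_mul _ _, integral_const_mul _ _]
        ring
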